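/- Let ρ_0, ρ_1 be density matrices (positive semi-definite with trace 1) and let {E_0, E_1, E_?} be positive semi-definite operators with E_0 + E_1 + E_? = 1 satisfying the unambiguous discrimination conditions Tr(E_0 ρ_1) = 0 and Tr(E_1 ρ_0) = 0. Then Tr(E_? ρ_0) · Tr(E_? ρ_1) ≥ F², where F = Tr(√(√ρ_0 ρ_1 √ρ_0)) is the fidelity of ρ_0 and ρ_1. -/

import Mathlib

open Matrix ComplexOrder

namespace Matrix.PosSemidef

/-- The square root of a positive semi-definite matrix (as defined in Mathlib, Dec 2024). -/
noncomputable def sqrt {n𝕜 : Type*} {𝕜 : Type*} [Fintype n𝕜] [DecidableEq n𝕜] [RCLike 𝕜]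
    {A : Matrix n𝕜 n𝕜 𝕜} (hA : PosSemidef A) : Matrix n𝕜 n𝕜 𝕜 :=
  hA.1.eigenvectorUnitary.1 * diagonal ((↑) ∘ (√·) ∘ hA.1.eigenvalues) *
  (star hA.1.eigenvectorUnitary : Matrix n𝕜 n𝕜 𝕜)

lemma posSemidef_sqrt {n𝕜 : Type*} {𝕜 : Type*} [Fintype n𝕜] [DecidableEq n𝕜] [RCLike 𝕜]
    {A : Matrix n𝕜 n𝕜 𝕜} (hA : PosSemidef A) : PosSemidef hA.sqrt := by
  apply PosSemidef.mul_mul_conjTranspose_same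
  refine posSemidef_diagonal_iff.mpr fun i ↦ ?_
  rw [Function.comp_apply, RCLike.nonneg_iff]
  constructor
  · simp only [RCLike.ofReal_re]
    exact Real.sqrt_nonneg _
  · simp only [RCLike.ofReal_im]

end Matrix.PosSemidef

lemma Matrix.PosSemidef.sqrt_mul_self {n𝕜 : Type*} {𝕜 : Type*} [Fintype n𝕜] [DecidableEq n𝕜]
    [RCLike 𝕜] {A : Matrix n𝕜 n𝕜 𝕜} (hA : PosSemidef A) : hA.sqrt * hA.sqrt = A := by
  have hU : star (hA.1.eigenvectorUnitary : Matrix n𝕜 n𝕜 𝕜) * hA.1.eigenvectorUnitary = 1 :=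
    Matrix.mem_unitaryGroup_iff'.mp hA.1.eigenvectorUnitary.2
  have h := hA.1.spectral_theorem
  rw [Unitary.conjStarAlgAut_apply] at h
  conv_rhs => rw [h]
  unfold sqrt
  calc _ = (hA.1.eigenvectorUnitary : Matrix n𝕜 n𝕜 𝕜) *
        (diagonal ((↑) ∘ (√·) ∘ hA.1.eigenvalues) *
          (star (hA.1.eigenvectorUnitary : Matrix n𝕜 n𝕜 𝕜) * hA.1.eigenvectorUnitary.1) *
          diagonal ((↑) ∘ (√·) ∘ hA.1.eigenvalues)) *
        star (hA.1.eigenvectorUnitary : Matrix n𝕜 n𝕜 𝕜) := by simp only [Matrix.mul_assoc]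
    _ = _ := by
      rw [hU, Matrix.mul_one, diagonal_mul_diagonal]
      congr 3
      funext i
      simp only [Function.comp_apply]
      rw [← RCLike.ofReal_mul, Real.mul_self_sqrt (hA.eigenvalues_nonneg i)]

lemma re_trace_ctm {n : ℕ} (T : Matrix (Fin n) (Fin n) ℂ) :
    ((Tᴴ * T).trace).re = ∑ j, ∑ i, Complex.normSq (T i j) := by
  simp only [Matrix.trace, Matrix.diag_apply, Matrix.mul_apply, Matrix.conjTranspose_apply,
    Complex.re_sum, Complex.mul_re, Complex.normSq_apply]
  congr 1; ext j; congr 1; ext i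
  simp [Complex.conj_re, Complex.conj_im]

lemma trace_ctm_nonneg {n : ℕ} (T : Matrix (Fin n) (Fin n) ℂ) :
    0 ≤ ((Tᴴ * T).trace).re := by
  rw [re_trace_ctm]
  exact Finset.sum_nonneg fun j _ => Finset.sum_nonneg fun i _ => Complex.normSq_nonneg _

lemma eq_zero_of_trace_ctm {n : ℕ} {T : Matrix (Fin n) (Fin n) ℂ}
    (h : (Tᴴ * T).trace = 0) : T = 0 := by
  have h' : ((Tᴴ * T).trace).re = 0 := by rw [h]; simp
  rw [re_trace_ctm] at h'
  have hz := (Finset.sum_eq_zero_iff_of_nonneg (fun j _ =>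
    Finset.sum_nonneg fun i _ => Complex.normSq_nonneg (T i j))).mp h'
  ext i j
  have hz' := (Finset.sum_eq_zero_iff_of_nonneg (fun i _ =>
    Complex.normSq_nonneg (T i j))).mp (hz j (Finset.mem_univ j)) i (Finset.mem_univ i)
  simpa using Complex.normSq_eq_zero.mp hz'

lemma re_trace_psd_nonneg {n : ℕ} {K : Matrix (Fin n) (Fin n) ℂ} (hK : K.PosSemidef) :
    0 ≤ (K.trace).re := by
  exact (RCLike.nonneg_iff.mp hK.trace_nonneg).1

lemma cs_trace {n : ℕ} (G H : Matrix (Fin n) (Fin n) ℂ) :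
    ((Gᴴ * H).trace).re ^ 2 ≤ ((Gᴴ * G).trace).re * ((Hᴴ * H).trace).re := by
  set S : ℝ := ∑ p : Fin n × Fin n, ‖G p.1 p.2‖ * ‖H p.1 p.2‖ with hS
  have h1 : (Gᴴ * H).trace = ∑ p : Fin n × Fin n, (starRingEnd ℂ) (G p.1 p.2) * H p.1 p.2 := by
    simp [Matrix.trace, Matrix.diag, Matrix.mul_apply, Matrix.conjTranspose_apply,
      Fintype.sum_prod_type_right]
  have habs : |((Gᴴ * H).trace).re| ≤ S := by
    calc |((Gᴴ * H).trace).re| ≤ ‖(Gᴴ * H).trace‖ := Complex.abs_re_le_norm _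
      _ ≤ ∑ p : Fin n × Fin n, ‖(starRingEnd ℂ) (G p.1 p.2) * H p.1 p.2‖ := by
          rw [h1]; exact norm_sum_le _ _
      _ = S := by simp [hS, Complex.norm_conj]
  have h2 := Finset.sum_mul_sq_le_sq_mul_sq Finset.univ
    (fun p : Fin n × Fin n => ‖G p.1 p.2‖) (fun p => ‖H p.1 p.2‖)
  calc ((Gᴴ * H).trace).re ^ 2 ≤ S ^ 2 := sq_le_sq' (abs_le.mp habs).1 (abs_le.mp habs).2
    _ ≤ (∑ p : Fin n × Fin n, ‖G p.1 p.2‖ ^ 2) * (∑ p : Fin n × Fin n, ‖H p.1 p.2‖ ^ 2) := h2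
    _ = ((Gᴴ * G).trace).re * ((Hᴴ * H).trace).re := by
        rw [re_trace_ctm, re_trace_ctm]
        simp [Fintype.sum_prod_type_right, Complex.sq_norm]

lemma usd_aux {n : ℕ} {E C ρ : Matrix (Fin n) (Fin n) ℂ} (S : Matrix (Fin n) (Fin n) ℂ)
    (hSh : Sᴴ = S) (hSS : S * S = E) (hCh : Cᴴ = C) (hCC : C * C = ρ)
    (h : (E * ρ).trace = 0) : E * C = 0 := by
  have h1 : ((S * C)ᴴ * (S * C)).trace = 0 := by
    rw [Matrix.conjTranspose_mul, hSh, hCh]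
    have h2 : C * S * (S * C) = C * (E * C) := by
      calc C * S * (S * C) = C * (S * S) * C := by noncomm_ring
        _ = C * (E * C) := by rw [hSS]; noncomm_ring
    rw [h2, Matrix.trace_mul_comm, Matrix.mul_assoc, hCC, h]
  have h3 : S * C = 0 := eq_zero_of_trace_ctm h1
  calc E * C = S * (S * C) := by rw [← Matrix.mul_assoc, hSS]
    _ = 0 := by rw [h3, Matrix.mul_zero]

lemma aux_main {n : ℕ} {ρ₀ ρ₁ Eq A Bm S P : Matrix (Fin n) (Fin n) ℂ}
    (hAh : Aᴴ = A) (hBmh : Bmᴴ = Bm) (hSh : Sᴴ = S)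
    (hAA : A * A = ρ₀) (hBmBm : Bm * Bm = ρ₁) (hSS : S * S = Eq)
    (hPpsd : P.PosSemidef) (hPP : P * P = A * ρ₁ * A)
    (hfac : Bm * A = Bm * Eq * A) :
    ((P.trace).re) ^ 2 ≤ ((Eq * ρ₀).trace).re * ((Eq * ρ₁).trace).re := by
  classical
  have hPh : P.IsHermitian := hPpsd.1
  set U : Matrix (Fin n) (Fin n) ℂ := (Matrix.IsHermitian.eigenvectorUnitary hPh : Matrix (Fin n) (Fin n) ℂ) with hUdef
  set lam : Fin n → ℝ := hPh.eigenvalues with hlamdef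
  have hlam : ∀ i, 0 ≤ lam i := fun i => hPpsd.eigenvalues_nonneg i
  have hUu : U * star U = 1 := Matrix.mem_unitaryGroup_iff.mp (Matrix.IsHermitian.eigenvectorUnitary hPh).2
  have hUu' : star U * U = 1 := Matrix.mem_unitaryGroup_iff'.mp (Matrix.IsHermitian.eigenvectorUnitary hPh).2
  set D : Matrix (Fin n) (Fin n) ℂ := Matrix.diagonal (fun i => ((lam i : ℝ) : ℂ)) with hDdef
  have hspec : P = U * D * star U := by
    have h := hPh.spectral_theorem
    rw [Unitary.conjStarAlgAut_apply] at h
    exact h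
  set B := Bm * A with hBdef
  have hBtB : Bᴴ * B = P * P := by
    rw [hBdef, Matrix.conjTranspose_mul, hAh, hBmh, hPP]
    calc A * Bm * (Bm * A) = A * (Bm * Bm) * A := by noncomm_ring
      _ = A * ρ₁ * A := by rw [hBmBm]
  have key : star U * (Bᴴ * B) * U = D * D := by
    rw [hBtB, hspec]
    calc star U * (U * D * star U * (U * D * star U)) * U
        = (star U * U) * D * (star U * U) * D * (star U * U) := by noncomm_ring
      _ = D * D := by rw [hUu']; noncomm_ring
  set dpi : Fin n → ℂ := fun i => if lam i = 0 then 0 else (((lam i)⁻¹ : ℝ) : ℂ) with hdpidef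
  have hdpistar : (Matrix.diagonal dpi)ᴴ = Matrix.diagonal dpi := by
    have hsd : star dpi = dpi := by
      funext i
      by_cases h : lam i = 0 <;> simp [hdpidef, h]
    rw [Matrix.diagonal_conjTranspose, hsd]
  set W := B * U * Matrix.diagonal dpi with hWdef
  have hBUBU : (B * U)ᴴ * (B * U) = D * D := by
    rw [Matrix.conjTranspose_mul, ← Matrix.star_eq_conjTranspose U]
    calc star U * Bᴴ * (B * U) = star U * (Bᴴ * B) * U := by noncomm_ring
      _ = D * D := key
  have hWBU : Wᴴ * (B * U) = D := by
    rw [hWdef, Matrix.conjTranspose_mul, hdpistar]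
    calc Matrix.diagonal dpi * (B * U)ᴴ * (B * U)
        = Matrix.diagonal dpi * ((B * U)ᴴ * (B * U)) := by noncomm_ring
      _ = Matrix.diagonal dpi * (D * D) := by rw [hBUBU]
      _ = D := by
          rw [hDdef, Matrix.diagonal_mul_diagonal, Matrix.diagonal_mul_diagonal]
          refine congrArg Matrix.diagonal (funext fun i => ?_)
          by_cases h : lam i = 0
          · simp [hdpidef, h]
          · have hne : (lam i : ℂ) ≠ 0 := by exact_mod_cast h
            simp only [hdpidef, if_neg h, Complex.ofReal_inv]
            field_simp
  set e : Fin n → ℂ := fun i => if lam i = 0 then 0 else 1 with hedef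
  have hWW : Wᴴ * W = Matrix.diagonal e := by
    rw [hWdef, Matrix.conjTranspose_mul, hdpistar]
    calc Matrix.diagonal dpi * (B * U)ᴴ * (B * U * Matrix.diagonal dpi)
        = Matrix.diagonal dpi * ((B * U)ᴴ * (B * U)) * Matrix.diagonal dpi := by noncomm_ring
      _ = Matrix.diagonal dpi * (D * D) * Matrix.diagonal dpi := by rw [hBUBU]
      _ = Matrix.diagonal e := by
          rw [hDdef, Matrix.diagonal_mul_diagonal, Matrix.diagonal_mul_diagonal,
            Matrix.diagonal_mul_diagonal]
          refine congrArg Matrix.diagonal (funext fun i => ?_)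
          by_cases h : lam i = 0
          · simp [hdpidef, hedef, h]
          · have hne : (lam i : ℂ) ≠ 0 := by exact_mod_cast h
            simp only [hdpidef, hedef, if_neg h, Complex.ofReal_inv]
            field_simp
  set X := S * Bm with hXdef
  set Y := S * A with hYdef
  have hBXY : B = Xᴴ * Y := by
    rw [hfac, ← hSS, hXdef, hYdef, Matrix.conjTranspose_mul, hSh, hBmh]
    noncomm_ring
  set G := X * W with hGdef
  set H := Y * U with hHdef
  have hFD : P.trace = D.trace := by
    rw [hspec, Matrix.trace_mul_cycle, hUu', Matrix.one_mul]
  have hGH : Gᴴ * H = D := by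
    have e1 : Gᴴ * H = Wᴴ * (B * U) := by
      rw [hGdef, hHdef, Matrix.conjTranspose_mul, hBXY]
      noncomm_ring
    rw [e1, hWBU]
  have hXX : (Xᴴ * X).trace = (Eq * ρ₁).trace := by
    have e1 : Xᴴ * X = Bm * Eq * Bm := by
      rw [hXdef, Matrix.conjTranspose_mul, hSh, hBmh, ← hSS]
      noncomm_ring
    rw [e1, Matrix.trace_mul_cycle, hBmBm, Matrix.trace_mul_comm]
  have hHH : (Hᴴ * H).trace = (Eq * ρ₀).trace := by
    have e1 : Hᴴ * H = star U * (Yᴴ * Y) * U := by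
      rw [hHdef, Matrix.conjTranspose_mul, ← Matrix.star_eq_conjTranspose U]
      noncomm_ring
    rw [e1, Matrix.trace_mul_cycle, hUu, Matrix.one_mul]
    have e2 : Yᴴ * Y = A * Eq * A := by
      rw [hYdef, Matrix.conjTranspose_mul, hSh, hAh, ← hSS]
      noncomm_ring
    rw [e2, Matrix.trace_mul_cycle, hAA, Matrix.trace_mul_comm]
  have hGGle : ((Gᴴ * G).trace).re ≤ ((Eq * ρ₁).trace).re := by
    set Q := W * Wᴴ with hQdef
    have hQh : Qᴴ = Q := by rw [hQdef, Matrix.conjTranspose_mul, Matrix.conjTranspose_conjTranspose]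
    have hde : Matrix.diagonal dpi * Matrix.diagonal e = Matrix.diagonal dpi := by
      rw [Matrix.diagonal_mul_diagonal]
      refine congrArg Matrix.diagonal (funext fun i => ?_)
      by_cases h : lam i = 0 <;> simp [hdpidef, hedef, h]
    have hWe : W * Matrix.diagonal e = W := by
      rw [hWdef, Matrix.mul_assoc, hde]
    have hQQ : Q * Q = Q := by
      calc Q * Q = W * (Wᴴ * W) * Wᴴ := by rw [hQdef]; noncomm_ring
        _ = W * Matrix.diagonal e * Wᴴ := by rw [hWW]
        _ = Q := by rw [hWe, hQdef]
    set R := (1 : Matrix (Fin n) (Fin n) ℂ) - Q with hRdef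
    have hRh : Rᴴ = R := by rw [hRdef, Matrix.conjTranspose_sub, Matrix.conjTranspose_one, hQh]
    have hRR : R * R = R := by
      rw [hRdef]
      calc (1 - Q) * (1 - Q) = 1 - Q - Q + Q * Q := by noncomm_ring
        _ = 1 - Q := by rw [hQQ]; noncomm_ring
    have hpsd : (R * (Xᴴ * X) * Rᴴ).PosSemidef :=
      (Matrix.posSemidef_conjTranspose_mul_self X).mul_mul_conjTranspose_same R
    have h1 : (Gᴴ * G).trace = ((Xᴴ * X) * Q).trace := by
      have e1 : Gᴴ * G = Wᴴ * (Xᴴ * X) * W := by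
        rw [hGdef, Matrix.conjTranspose_mul]
        noncomm_ring
      rw [e1, Matrix.trace_mul_cycle, ← hQdef, Matrix.trace_mul_comm]
    have htr : (R * (Xᴴ * X) * Rᴴ).trace = (Xᴴ * X).trace - (Gᴴ * G).trace := by
      rw [hRh, Matrix.trace_mul_cycle, hRR, Matrix.trace_mul_comm]
      have e2 : (Xᴴ * X) * R = Xᴴ * X - Xᴴ * X * Q := by rw [hRdef]; noncomm_ring
      rw [e2, Matrix.trace_sub, ← h1]
    have hnn : 0 ≤ ((R * (Xᴴ * X) * Rᴴ).trace).re := re_trace_psd_nonneg hpsd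
    rw [htr, Complex.sub_re] at hnn
    rw [← hXX]
    linarith
  have hHHnn : 0 ≤ ((Hᴴ * H).trace).re := re_trace_psd_nonneg (Matrix.posSemidef_conjTranspose_mul_self H)
  calc ((P.trace).re) ^ 2 = (((Gᴴ * H).trace).re) ^ 2 := by rw [hGH, ← hFD]
    _ ≤ ((Gᴴ * G).trace).re * ((Hᴴ * H).trace).re := cs_trace G H
    _ ≤ ((Eq * ρ₁).trace).re * ((Hᴴ * H).trace).re := mul_le_mul_of_nonneg_right hGGle hHHnn
    _ = ((Eq * ρ₀).trace).re * ((Eq * ρ₁).trace).re := by rw [hHH]; ring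

/-- The matrix `√ρ₀ ρ₁ √ρ₀` is positive semi-definite. -/
noncomputable def sqrtConjPosSemidef {n : ℕ} {ρ₀ ρ₁ : Matrix (Fin n) (Fin n) ℂ}
    (h₀ : ρ₀.PosSemidef) (h₁ : ρ₁.PosSemidef) :
    (h₀.sqrt * ρ₁ * h₀.sqrt).PosSemidef := by
  have h := h₁.mul_mul_conjTranspose_same h₀.sqrt
  rwa [h₀.posSemidef_sqrt.1] at h

/-- The fidelity `F(ρ₀, ρ₁) = Tr √(√ρ₀ ρ₁ √ρ₀)` of two positive
semi-definite matrices. -/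
noncomputable def fidelity {n : ℕ} {ρ₀ ρ₁ : Matrix (Fin n) (Fin n) ℂ}
    (h₀ : ρ₀.PosSemidef) (h₁ : ρ₁.PosSemidef) : ℝ :=
  ((sqrtConjPosSemidef h₀ h₁).sqrt.trace).re

/-- For a USD POVM `{E₀, E₁, E?}` on density matrices `ρ₀`, `ρ₁`,
`Tr(E? ρ₀) · Tr(E? ρ₁) ≥ F²` where `F` is the fidelity. -/
theorem failure_product_ge_fidelity_sq {n : ℕ}
    {ρ₀ ρ₁ E₀ E₁ Eq : Matrix (Fin n) (Fin n) ℂ}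
    (h₀ : ρ₀.PosSemidef) (h₁ : ρ₁.PosSemidef)
    (ht₀ : ρ₀.trace = 1) (ht₁ : ρ₁.trace = 1)
    (hE₀ : E₀.PosSemidef) (hE₁ : E₁.PosSemidef) (hEq : Eq.PosSemidef)
    (hsum : E₀ + E₁ + Eq = 1)
    (hU₀ : (E₀ * ρ₁).trace = 0) (hU₁ : (E₁ * ρ₀).trace = 0) :
    fidelity h₀ h₁ ^ 2 ≤ ((Eq * ρ₀).trace).re * ((Eq * ρ₁).trace).re := by
  have hE0Bm : E₀ * h₁.sqrt = 0 :=
    usd_aux hE₀.sqrt hE₀.posSemidef_sqrt.1 hE₀.sqrt_mul_self h₁.posSemidef_sqrt.1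
      h₁.sqrt_mul_self hU₀
  have hE1A : E₁ * h₀.sqrt = 0 :=
    usd_aux hE₁.sqrt hE₁.posSemidef_sqrt.1 hE₁.sqrt_mul_self h₀.posSemidef_sqrt.1
      h₀.sqrt_mul_self hU₁
  have hBmE0 : h₁.sqrt * E₀ = 0 := by
    have := congrArg Matrix.conjTranspose hE0Bm
    simpa [Matrix.conjTranspose_mul, h₁.posSemidef_sqrt.1.eq, hE₀.1.eq] using this
  have hfac : h₁.sqrt * h₀.sqrt = h₁.sqrt * Eq * h₀.sqrt := by
    calc h₁.sqrt * h₀.sqrt = h₁.sqrt * 1 * h₀.sqrt := by rw [Matrix.mul_one]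
      _ = h₁.sqrt * (E₀ + E₁ + Eq) * h₀.sqrt := by rw [hsum]
      _ = h₁.sqrt * E₀ * h₀.sqrt + h₁.sqrt * (E₁ * h₀.sqrt) + h₁.sqrt * Eq * h₀.sqrt := by
          noncomm_ring
      _ = h₁.sqrt * Eq * h₀.sqrt := by
          rw [hBmE0, hE1A, Matrix.zero_mul, Matrix.mul_zero]
          noncomm_ring
  have hPP : (sqrtConjPosSemidef h₀ h₁).sqrt * (sqrtConjPosSemidef h₀ h₁).sqrt
      = h₀.sqrt * ρ₁ * h₀.sqrt := (sqrtConjPosSemidef h₀ h₁).sqrt_mul_self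
  exact aux_main h₀.posSemidef_sqrt.1 h₁.posSemidef_sqrt.1 hEq.posSemidef_sqrt.1
    h₀.sqrt_mul_self h₁.sqrt_mul_self hEq.sqrt_mul_self
    (sqrtConjPosSemidef h₀ h₁).posSemidef_sqrt hPP hfac
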